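/- arXiv:0902.1407 — 2 statements merged into one kernel-verified Lean document; each statement's English description precedes it below -/
import Mathlib

section
/- Let f : [0, ∞) → ℝ be lower semicontinuous and let D ⊆ (0, ∞) be a countable dense subset. Assume that for every t ∈ D one has f(t) ≤ f(0) and f(t) ≤ f(s) for Lebesgue-almost every s ∈ (0, t). Then f(t) ≤ f(0) for every t ≥ 0, and there exists a Lebesgue-null set N ⊆ (0, ∞) such that for every s ∈ (0, ∞) \ N and every t ≥ s one has f(t) ≤ f(s). -/
/-!
An upper bound `f ≤ c` on a dense set propagates, by lower semicontinuity, to every point of an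
open set it is dense in. Both claims are instances: with `c = f 0` on `(0, ∞)`, and with `c = f s`
on `(s, ∞)` for every `s` off the null set `N`, the union over the countably many `t ∈ D` of the
exceptional sets `{s ∈ (0, t) | f s < f t}`.
-/

open MeasureTheory Set

theorem LowerSemicontinuousWithinAt.le_of_mem_closure {α β : Type*} [TopologicalSpace α]
    [LinearOrder β] {f : α → β} {s S : Set α} {x : α} {c : β}
    (hf : LowerSemicontinuousWithinAt f s x) (hx : x ∈ closure (s ∩ S))
    (hS : ∀ y ∈ s ∩ S, f y ≤ c) : f x ≤ c := by
  refine not_lt.1 ((semicontinuousWithinAt_iff_frequently.1 hf) c ?_)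
  refine frequently_nhdsWithin_iff.2 ((mem_closure_iff_frequently.1 hx).mono ?_)
  exact fun y hy => ⟨not_lt.2 (hS y hy), hy.1⟩

theorem LowerSemicontinuousOn.le_of_le_on_dense {α β : Type*} [TopologicalSpace α]
    [LinearOrder β] {f : α → β} {U D : Set α} {c : β}
    (hf : LowerSemicontinuousOn f U) (hU : IsOpen U) (hD : U ⊆ closure D)
    (hle : ∀ d ∈ U ∩ D, f d ≤ c) {x : α} (hx : x ∈ U) : f x ≤ c :=
  LowerSemicontinuousWithinAt.le_of_mem_closure (hf x hx) (hU.inter_closure ⟨hx, hD hx⟩) hle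

theorem energy_ineq_upgrade_general (f : ℝ → ℝ)
    (hf : LowerSemicontinuousOn f (Set.Ici (0 : ℝ)))
    (D : Set ℝ) (hD_count : D.Countable)
    (hD_dense : Set.Ioi (0 : ℝ) ⊆ closure D)
    (hineq : ∀ t ∈ D, f t ≤ f 0 ∧
      ∀ᵐ s ∂(volume.restrict (Set.Ioo (0 : ℝ) t)), f t ≤ f s) :
    (∀ t ≥ (0 : ℝ), f t ≤ f 0) ∧
    ∃ N : Set ℝ, N ⊆ Set.Ioi (0 : ℝ) ∧ volume N = 0 ∧
      ∀ s ∈ Set.Ioi (0 : ℝ) \ N, ∀ t ≥ s, f t ≤ f s := by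
  have hlsc : ∀ a ≥ (0 : ℝ), LowerSemicontinuousOn f (Ioi a) :=
    fun a ha => hf.mono (Ioi_subset_Ici ha)
  have hdense : ∀ a ≥ (0 : ℝ), Ioi a ⊆ closure D :=
    fun a ha => (Ioi_subset_Ioi ha).trans hD_dense
  have hae : ∀ᵐ s, ∀ t ∈ D, s ∈ Ioo 0 t → f t ≤ f s :=
    (ae_ball_iff hD_count).2 fun t ht => (ae_restrict_iff' measurableSet_Ioo).1 (hineq t ht).2
  refine ⟨fun t ht => ?_, Ioi 0 ∩ {s | ¬ ∀ t ∈ D, s ∈ Ioo 0 t → f t ≤ f s}, inter_subset_left,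
    measure_mono_null inter_subset_right (ae_iff.1 hae), ?_⟩
  · rcases ht.eq_or_lt with rfl | hpos
    · rfl
    · exact (hlsc 0 le_rfl).le_of_le_on_dense isOpen_Ioi (hdense 0 le_rfl)
        (fun d hd => (hineq d hd.2).1) hpos
  · rintro s ⟨hs, hsN⟩ t hst
    have hs_good : ∀ t ∈ D, s ∈ Ioo 0 t → f t ≤ f s := by
      simpa only [mem_inter_iff, mem_ofPred_eq, hs, true_and, not_not] using hsN
    rcases hst.eq_or_lt with rfl | hlt
    · rfl
    · exact (hlsc s (le_of_lt hs)).le_of_le_on_dense isOpen_Ioi (hdense s (le_of_lt hs))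
        (fun d hd => hs_good d hd.2 ⟨hs, hd.1⟩) hlt

/-- If a lower semicontinuous function `f : [0, ∞) → ℝ` satisfies, at each time `t` in a
countable dense subset `D` of `(0, ∞)`, the inequality `f t ≤ f 0` together with
`f t ≤ f s` for Lebesgue-a.e. `s ∈ (0, t)`, then `f t ≤ f 0` for all `t ≥ 0` and there is
a Lebesgue-null set `N ⊆ (0, ∞)` such that `f t ≤ f s` for all `s ∈ (0, ∞) \ N` and all
`t ≥ s`. -/
theorem energy_ineq_upgrade (f : ℝ → ℝ)
    (hf : LowerSemicontinuousOn f (Set.Ici (0 : ℝ)))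
    (D : Set ℝ) (hD_count : D.Countable) (hD_sub : D ⊆ Set.Ioi (0 : ℝ))
    (hD_dense : Set.Ioi (0 : ℝ) ⊆ closure D)
    (hineq : ∀ t ∈ D, f t ≤ f 0 ∧
      ∀ᵐ s ∂(volume.restrict (Set.Ioo (0 : ℝ) t)), f t ≤ f s) :
    (∀ t ≥ (0 : ℝ), f t ≤ f 0) ∧
    ∃ N : Set ℝ, N ⊆ Set.Ioi (0 : ℝ) ∧ volume N = 0 ∧
      ∀ s ∈ Set.Ioi (0 : ℝ) \ N, ∀ t ≥ s, f t ≤ f s :=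
  energy_ineq_upgrade_general f hf D hD_count hD_dense hineq
end

section
/- Let (Ω, 𝓕, P) be a probability space and let E : [0, ∞) × Ω → ℝ be measurable with respect to the product of the Borel σ-algebra on [0, ∞) and 𝓕, such that for every ω ∈ Ω the map t ↦ E(t, ω) is lower semicontinuous. Then the following are equivalent: (a) there exists a Lebesgue-null set T ⊆ (0, ∞) such that for every s ∈ ((0, ∞) \ T) ∪ {0} and every t ≥ s one has P({ω : E(t, ω) ≤ E(s, ω)}) = 1; (b) P({ω : E(t, ω) ≤ E(0, ω) for all t ≥ 0, and for Lebesgue-almost every s > 0 one has E(t, ω) ≤ E(s, ω) for all t ≥ s}) = 1. -/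
/-!
By lower semicontinuity, the pathwise inequality `E (t, ω) ≤ E (s, ω)` for all `t ≥ s` only
has to be checked at rational `t`, which makes it a jointly measurable predicate of `(s, ω)`.
Condition (a) then says that this predicate holds for a.e. `s`, for a.e. `ω`, and (b) that it
holds for a.e. `ω`, for a.e. `s`; Fubini exchanges the two.
-/

open MeasureTheory Filter Set Topology

theorem LowerSemicontinuousOn.forall_ge_le_iff_forall_rat {β : Type*} [LinearOrder β]
    {f : ℝ → β} {s : ℝ} (hf : LowerSemicontinuousOn f (Ioi s)) :
    (∀ t ≥ s, f t ≤ f s) ↔ ∀ q : ℚ, s ≤ q → f q ≤ f s := by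
  refine ⟨fun h q hq => h q hq, fun h t hst => ?_⟩
  rcases hst.eq_or_lt with rfl | hst
  · exact le_rfl
  by_contra! hft
  have hnear := hf t hst (f s) hft
  rw [isOpen_Ioi.nhdsWithin_eq hst] at hnear
  have hU : {u | f s < f u ∧ s < u} ∈ 𝓝 t := hnear.and (Ioi_mem_nhds hst)
  obtain ⟨_, ⟨hfq, hsq⟩, q, rfl⟩ := mem_closure_iff_nhds.mp (Rat.denseRange_cast t) _ hU
  exact (h q hsq.le).not_gt hfq

theorem Measurable.forall_ae {α β : Type*} [MeasurableSpace α] [MeasurableSpace β]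
    {μ : Measure α} [SFinite μ] {p : α → β → Prop}
    (hp : Measurable fun x : α × β => p x.1 x.2) :
    Measurable fun y => ∀ᵐ x ∂μ, p x y := by
  simp_rw [ae_iff]
  exact measurableSet_setOfPred.mp
    (measurable_measure_prodMk_right (μ := μ) hp.setOf.compl (measurableSet_singleton 0))

theorem ae_restrict_iff_exists_subset_null {α : Type*} [MeasurableSpace α] {μ : Measure α}
    {s : Set α} (hs : MeasurableSet s) {p : α → Prop} :
    (∀ᵐ x ∂μ.restrict s, p x) ↔ ∃ t ⊆ s, μ t = 0 ∧ ∀ x ∈ s \ t, p x := by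
  rw [ae_restrict_iff' hs]
  constructor
  · intro h
    refine ⟨{x | x ∈ s ∧ ¬p x}, fun x hx => hx.1, by simpa [ae_iff] using h, ?_⟩
    exact fun x hx => not_not.mp fun hpx => hx.2 ⟨hx.1, hpx⟩
  · rintro ⟨t, -, ht, hp⟩
    exact measure_mono_null (fun x hx => by_contra fun hxt => hx fun hxs => hp x ⟨hxs, hxt⟩) ht

theorem measurable_forall_rat_ge_le {Ω : Type*} [MeasurableSpace Ω] {E : ℝ × Ω → ℝ}
    (hE : Measurable E) : Measurable fun x : ℝ × Ω => ∀ q : ℚ, x.1 ≤ q → E (q, x.2) ≤ E x :=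
  Measurable.forall fun _ =>
    (measurableSet_setOfPred.mp (measurableSet_le measurable_fst measurable_const)).imp
      (measurableSet_setOfPred.mp
        (measurableSet_le (hE.comp (measurable_const.prodMk measurable_snd)) hE))

theorem forall_ge_prob_le_eq_one_iff_ae_forall_rat {Ω : Type*} [MeasurableSpace Ω]
    {P : Measure Ω} [IsProbabilityMeasure P] {E : ℝ × Ω → ℝ} (hE : Measurable E) {s : ℝ}
    (hlsc : ∀ ω, LowerSemicontinuousOn (fun t => E (t, ω)) (Ioi s)) :
    (∀ t ≥ s, P {ω | E (t, ω) ≤ E (s, ω)} = 1) ↔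
      ∀ᵐ ω ∂P, ∀ q : ℚ, s ≤ (q : ℝ) → E (q, ω) ≤ E (s, ω) := by
  have hmeas (t : ℝ) : Measurable fun ω => E (t, ω) ≤ E (s, ω) :=
    measurableSet_setOfPred.mp <|
      measurableSet_le (hE.comp measurable_prodMk_left) (hE.comp measurable_prodMk_left)
  constructor
  · intro h
    refine ae_all_iff.mpr fun q => eventually_imp_distrib_left.mpr fun hq => ?_
    exact (ae_iff_prob_eq_one (hmeas q)).mpr (h q hq)
  · intro h t ht
    refine (ae_iff_prob_eq_one (hmeas t)).mp ?_
    filter_upwards [h] with ω hω using ((hlsc ω).forall_ge_le_iff_forall_rat.mpr hω) t ht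

/-- Equivalence between property (e3) and property (e3c): for a probability `P` and a
jointly measurable `E : [0, ∞) × Ω → ℝ` which is lower semicontinuous in time for each
`ω`, the existence of a Lebesgue-null set `T ⊆ (0, ∞)` with
`P {E (t, ·) ≤ E (s, ·)} = 1` for all `s ∈ ((0, ∞) \ T) ∪ {0}` and all `t ≥ s` is
equivalent to the existence of one `P`-full event on which the pathwise energy inequality
holds for `s = 0` and all `t ≥ 0` and for a.e. `s > 0` and all `t ≥ s`. -/
theorem energy_ineq_ae_iff_full_event {Ω : Type*} [MeasurableSpace Ω]
    (P : Measure Ω) [IsProbabilityMeasure P]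
    (E : ℝ × Ω → ℝ) (hE : Measurable E)
    (hlsc : ∀ ω : Ω, LowerSemicontinuousOn (fun t => E (t, ω)) (Set.Ici (0 : ℝ))) :
    (∃ T : Set ℝ, T ⊆ Set.Ioi (0 : ℝ) ∧ volume T = 0 ∧
        ∀ s ∈ (Set.Ioi (0 : ℝ) \ T) ∪ {0}, ∀ t ≥ s,
          P {ω : Ω | E (t, ω) ≤ E (s, ω)} = 1) ↔
      P {ω : Ω | (∀ t ≥ (0 : ℝ), E (t, ω) ≤ E (0, ω)) ∧
          ∀ᵐ s ∂(volume.restrict (Set.Ioi (0 : ℝ))), ∀ t ≥ s, E (t, ω) ≤ E (s, ω)} = 1 := by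
  set μ : Measure ℝ := volume.restrict (Ioi 0)
  have hlsc' (s : ℝ) (hs : 0 ≤ s) ω : LowerSemicontinuousOn (fun t => E (t, ω)) (Ioi s) :=
    (hlsc ω).mono (Ioi_subset_Ici hs)
  have hrat := measurable_forall_rat_ge_le hE
  have hpos : ∀ᵐ s ∂μ, 0 ≤ s := (ae_restrict_mem measurableSet_Ioi).mono fun _ hs => hs.le
  calc _ ↔ (∀ᵐ s ∂μ, ∀ t ≥ s, P {ω | E (t, ω) ≤ E (s, ω)} = 1) ∧
        ∀ t ≥ (0 : ℝ), P {ω | E (t, ω) ≤ E (0, ω)} = 1 := by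
        rw [ae_restrict_iff_exists_subset_null measurableSet_Ioi]
        simp only [mem_union, mem_singleton_iff, or_imp, forall_and, forall_eq,
          ← exists_and_right, and_assoc]
    _ ↔ (∀ᵐ s ∂μ, ∀ᵐ ω ∂P, ∀ q : ℚ, s ≤ (q : ℝ) → E (q, ω) ≤ E (s, ω)) ∧
        ∀ᵐ ω ∂P, ∀ q : ℚ, (0 : ℝ) ≤ q → E (q, ω) ≤ E (0, ω) := by
        rw [forall_ge_prob_le_eq_one_iff_ae_forall_rat hE (hlsc' 0 le_rfl)]
        exact and_congr_left' (eventually_congr (hpos.mono fun s hs =>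
          forall_ge_prob_le_eq_one_iff_ae_forall_rat hE (hlsc' s hs)))
    _ ↔ ∀ᵐ ω ∂P, (∀ q : ℚ, (0 : ℝ) ≤ q → E (q, ω) ≤ E (0, ω)) ∧
        ∀ᵐ s ∂μ, ∀ q : ℚ, s ≤ (q : ℝ) → E (q, ω) ≤ E (s, ω) := by
        rw [Measure.ae_ae_comm hrat.setOf, and_comm, eventually_and]
    _ ↔ _ := by
        refine (ae_iff_prob_eq_one
          ((hrat.comp measurable_prodMk_left).and hrat.forall_ae)).trans ?_
        congr! 3
        ext ω
        exact and_congr (hlsc' 0 le_rfl ω).forall_ge_le_iff_forall_rat.symm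
          (eventually_congr (hpos.mono fun s hs =>
            (hlsc' s hs ω).forall_ge_le_iff_forall_rat.symm))
end
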